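/- arXiv:1910.09150 — 3 statements merged into one kernel-verified Lean document; each statement's English description precedes it below -/
import Mathlib

section
/- Let n ≥ 1, let g be admissible, let α ∈ [0,1), β ∈ (−π/2, π/2), and let h ∈ M̃_g^{α,β}. Then for every z ∈ 𝔹ⁿ one has (1−α)·cos β·‖z‖²·(min{g(‖z‖), g(−‖z‖)} + α/(1−α)) ≤ Re⟨e^{−iβ}·h(z), z⟩ ≤ (1−α)·cos β·‖z‖²·(max{g(‖z‖), g(−‖z‖)} + α/(1−α)). -/
open Complex Metric

noncomputable section

abbrev Cn (n : ℕ) := EuclideanSpace ℂ (Fin n)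

/-- An admissible function `g` in the sense of Definition 1.1. -/
structure Admissible (g : ℂ → ℂ) : Prop where
  holo : DifferentiableOn ℂ g (ball (0:ℂ) 1)
  inj : Set.InjOn g (ball (0:ℂ) 1)
  one : g 0 = 1
  conj_symm : ∀ ζ ∈ ball (0:ℂ) 1, g ((starRingEnd ℂ) ζ) = (starRingEnd ℂ) (g ζ)
  re_pos : ∀ ζ ∈ ball (0:ℂ) 1, 0 < (g ζ).re
  min_le : ∀ r : ℝ, 0 < r → r < 1 → ∀ ζ : ℂ, ‖ζ‖ = r →
      min (g (r:ℂ)).re (g (-(r:ℂ))).re ≤ (g ζ).re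
  le_max : ∀ r : ℝ, 0 < r → r < 1 → ∀ ζ : ℂ, ‖ζ‖ = r →
      (g ζ).re ≤ max (g (r:ℂ)).re (g (-(r:ℂ))).re

/-- Membership in the class `M̃_g^{α,β}`. -/
def MtildeMem (n : ℕ) (g : ℂ → ℂ) (α β : ℝ) (h : Cn n → Cn n) : Prop :=
  DifferentiableOn ℂ h (ball (0 : Cn n) 1) ∧ h 0 = 0 ∧
  fderiv ℂ h 0 = ContinuousLinearMap.id ℂ (Cn n) ∧
  ∀ z ∈ ball (0 : Cn n) 1, z ≠ 0 →
    ((-(α:ℂ) + Complex.I * (Real.tan β : ℂ)) / (1 - (α:ℂ)) +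
      (1 - Complex.I * (Real.tan β : ℂ)) / (1 - (α:ℂ)) *
        ((inner ℂ z (h z) : ℂ) / (‖z‖:ℂ)^2))
      ∈ g '' ball (0:ℂ) 1

/-- Membership in the class `Ŝ_g^{α,β}(𝔹ⁿ)`. -/
def ShatMem (n : ℕ) (g : ℂ → ℂ) (α β : ℝ) (f : Cn n → Cn n) : Prop :=
  DifferentiableOn ℂ f (ball (0 : Cn n) 1) ∧ f 0 = 0 ∧
  fderiv ℂ f 0 = ContinuousLinearMap.id ℂ (Cn n) ∧
  (∀ z ∈ ball (0 : Cn n) 1, Function.Bijective (fderiv ℂ f z)) ∧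
  ∃ w : Cn n → Cn n, (∀ z ∈ ball (0 : Cn n) 1, fderiv ℂ f z (w z) = f z) ∧
    MtildeMem n g α β w

end

/-!
Fix `z ≠ 0` and the unit vector `u = z / ‖z‖`. With `A`, `B` the affine coefficients in the
definition of `M̃_g^{α,β}`, the function `ψ ξ = A + B * ⟪u, h (ξ • u)⟫ / ξ` is holomorphic on the
disk, `ψ 0 = 1 = g 0`, and `ψ` takes values in `g(𝔻)`. Since `g` is univalent, `q = g⁻¹ ∘ ψ` is a
holomorphic self-map of the disk fixing `0`, so by Schwarz's lemma `ψ ‖z‖ = g ζ` with `‖ζ‖ ≤ ‖z‖`.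
By the minimum and maximum principles for `Re g` on the disk of radius `‖z‖`, together with the
admissibility of `g`, `Re g ζ` lies between `min` and `max` of `g (±‖z‖)`; undoing the affine
normalisation gives the two bounds.
-/

open Set Filter Function Topology

section MaximumPrinciple

variable {E : Type*} [NormedAddCommGroup E] [NormedSpace ℂ E] [Nontrivial E]
  {f : E → ℂ} {U : Set E} {M : ℝ} {z : E}

theorem re_le_of_forall_mem_frontier_re_le (hU : Bornology.IsBounded U) (hf : DiffContOnCl ℂ f U)
    (hM : ∀ w ∈ frontier U, (f w).re ≤ M) (hz : z ∈ closure U) : (f z).re ≤ M := by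
  have hexp : DiffContOnCl ℂ (fun w => exp (f w)) U :=
    ⟨hf.differentiableOn.cexp, hf.continuousOn.cexp⟩
  have := norm_le_of_forall_mem_frontier_norm_le hU hexp (C := Real.exp M)
    (fun w hw => by rw [norm_exp]; exact Real.exp_le_exp.2 (hM w hw)) hz
  rwa [norm_exp, Real.exp_le_exp] at this

theorem le_re_of_forall_mem_frontier_le_re (hU : Bornology.IsBounded U) (hf : DiffContOnCl ℂ f U)
    (hM : ∀ w ∈ frontier U, M ≤ (f w).re) (hz : z ∈ closure U) : M ≤ (f z).re := by
  simpa using re_le_of_forall_mem_frontier_re_le (f := -f) (M := -M) hU hf.neg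
    (fun w hw => by simpa using hM w hw) hz

end MaximumPrinciple

theorem Admissible.re_mem_Icc {g : ℂ → ℂ} (hg : Admissible g) {r : ℝ} (hr0 : 0 < r)
    (hr1 : r < 1) {ζ : ℂ} (hζ : ‖ζ‖ ≤ r) :
    (g ζ).re ∈ Icc (min (g r).re (g (-r)).re) (max (g r).re (g (-r)).re) := by
  have hdiff : DiffContOnCl ℂ g (ball 0 r) :=
    hg.holo.diffContOnCl_ball (closedBall_subset_ball hr1)
  have hζ' : ζ ∈ closure (ball 0 r) := by rwa [closure_ball 0 hr0.ne', mem_closedBall_zero_iff]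
  have hsphere : ∀ w ∈ frontier (ball (0:ℂ) r), ‖w‖ = r := fun w hw => by
    rwa [frontier_ball 0 hr0.ne', mem_sphere_zero_iff_norm] at hw
  exact ⟨le_re_of_forall_mem_frontier_le_re isBounded_ball hdiff
      (fun w hw => hg.min_le r hr0 hr1 w (hsphere w hw)) hζ',
    re_le_of_forall_mem_frontier_re_le isBounded_ball hdiff
      (fun w hw => hg.le_max r hr0 hr1 w (hsphere w hw)) hζ'⟩

section InverseFunction

variable {g : ℂ → ℂ} {U : Set ℂ} {z : ℂ}

theorem not_eventually_eq_of_injOn (hinj : InjOn g U) (hz : U ∈ 𝓝 z) :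
    ¬ ∀ᶠ w in 𝓝 z, g w = g z := by
  intro hconst
  have : ∀ᶠ w in 𝓝[≠] z, g w = g z ∧ w ∈ U := (hconst.and hz).filter_mono nhdsWithin_le_nhds
  obtain ⟨w, ⟨hgw, hwU⟩, hwz⟩ := (this.and self_mem_nhdsWithin).exists
  exact hwz (hinj hwU (mem_of_mem_nhds hz) hgw)

theorem nhds_le_map_nhds_of_injOn (hU : IsOpen U) (hg : DifferentiableOn ℂ g U)
    (hinj : InjOn g U) (hz : z ∈ U) : 𝓝 (g z) ≤ map g (𝓝 z) :=
  (hg.analyticAt (hU.mem_nhds hz)).eventually_constant_or_nhds_le_map_nhds.resolve_left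
    (not_eventually_eq_of_injOn hinj (hU.mem_nhds hz))

theorem tendsto_invFunOn_of_injOn (hU : IsOpen U) (hg : DifferentiableOn ℂ g U)
    (hinj : InjOn g U) (hz : z ∈ U) : Tendsto (invFunOn g U) (𝓝 (g z)) (𝓝 z) := by
  intro V hV
  have hV' : g '' (V ∩ U) ∈ 𝓝 (g z) :=
    nhds_le_map_nhds_of_injOn hU hg hinj hz (image_mem_map (inter_mem hV (hU.mem_nhds hz)))
  refine mem_map.2 (mem_of_superset hV' ?_)
  rintro _ ⟨w, ⟨hwV, hwU⟩, rfl⟩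
  rwa [mem_preimage, hinj.leftInvOn_invFunOn hwU]

theorem eventually_deriv_ne_zero_of_injOn (hU : IsOpen U) (hg : DifferentiableOn ℂ g U)
    (hinj : InjOn g U) (hz : z ∈ U) : ∀ᶠ w in 𝓝[≠] z, deriv g w ≠ 0 := by
  refine (hg.analyticAt (hU.mem_nhds hz)).deriv.eventually_eq_zero_or_eventually_ne_zero
    |>.resolve_left fun hzero => ?_
  obtain ⟨ε, hε, hball⟩ := Metric.eventually_nhds_iff_ball.1 (hzero.and (hU.mem_nhds hz))
  apply not_eventually_eq_of_injOn hinj (hU.mem_nhds hz)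
  filter_upwards [ball_mem_nhds z hε] with w hw
  exact isOpen_ball.is_const_of_deriv_eq_zero (convex_ball z ε).isPreconnected
    (hg.mono fun x hx => (hball x hx).2) (fun x hx => (hball x hx).1) hw (mem_ball_self hε)

theorem hasDerivAt_invFunOn_of_injOn (hU : IsOpen U) (hg : DifferentiableOn ℂ g U)
    (hinj : InjOn g U) (hz : z ∈ U) (hz' : deriv g z ≠ 0) :
    HasDerivAt (invFunOn g U) (deriv g z)⁻¹ (g z) := by
  have hinv : invFunOn g U (g z) = z := hinj.leftInvOn_invFunOn hz
  refine HasDerivAt.of_local_left_inverse (f := g) ?_ ?_ hz' ?_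
  · rw [ContinuousAt, hinv]
    exact tendsto_invFunOn_of_injOn hU hg hinj hz
  · rw [hinv]
    exact (hg.differentiableAt (hU.mem_nhds hz)).hasDerivAt
  · filter_upwards [nhds_le_map_nhds_of_injOn hU hg hinj hz (image_mem_map (hU.mem_nhds hz))]
      with y hy
    exact invFunOn_eq hy

theorem differentiableOn_invFunOn_of_injOn (hU : IsOpen U) (hg : DifferentiableOn ℂ g U)
    (hinj : InjOn g U) : DifferentiableOn ℂ (invFunOn g U) (g '' U) := by
  rintro _ ⟨z, hz, rfl⟩
  refine DifferentiableAt.differentiableWithinAt ?_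
  have hdiff : ∀ w ∈ U, deriv g w ≠ 0 → DifferentiableAt ℂ (invFunOn g U) (g w) :=
    fun w hw hw' => (hasDerivAt_invFunOn_of_injOn hU hg hinj hw hw').differentiableAt
  by_cases hz' : deriv g z = 0
  swap
  · exact hdiff z hz hz'
  -- a critical point of `g` is isolated, so this is a removable singularity of the inverse
  have hinv : invFunOn g U (g z) = z := hinj.leftInvOn_invFunOn hz
  have htendsto := tendsto_invFunOn_of_injOn hU hg hinj hz
  have himage : g '' U ∈ 𝓝 (g z) :=
    nhds_le_map_nhds_of_injOn hU hg hinj hz (image_mem_map (hU.mem_nhds hz))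
  have hpunct : Tendsto (invFunOn g U) (𝓝[≠] (g z)) (𝓝[≠] z) := by
    refine tendsto_nhdsWithin_iff.2 ⟨htendsto.mono_left nhdsWithin_le_nhds, ?_⟩
    filter_upwards [self_mem_nhdsWithin, nhdsWithin_le_nhds himage]
    rintro _ hne ⟨w, hw, rfl⟩ heq
    rw [mem_singleton_iff, hinj.leftInvOn_invFunOn hw] at heq
    exact hne (congrArg g heq)
  refine (analyticAt_of_differentiable_on_punctured_nhds_of_continuousAt ?_
    (by rwa [ContinuousAt, hinv])).differentiableAt
  filter_upwards [hpunct.eventually (eventually_deriv_ne_zero_of_injOn hU hg hinj hz),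
    nhdsWithin_le_nhds himage]
  rintro _ hy ⟨w, hw, rfl⟩
  rw [hinj.leftInvOn_invFunOn hw] at hy
  exact hdiff w hw hy

end InverseFunction

theorem exists_norm_le_and_eq_of_mapsTo_image {g ψ : ℂ → ℂ}
    (hg : DifferentiableOn ℂ g (ball 0 1)) (hinj : InjOn g (ball 0 1))
    (hψ : DifferentiableOn ℂ ψ (ball 0 1)) (hψ0 : ψ 0 = g 0)
    (hmaps : MapsTo ψ (ball 0 1) (g '' ball 0 1)) {ξ : ℂ} (hξ : ξ ∈ ball (0:ℂ) 1) :
    ∃ ζ, ‖ζ‖ ≤ ‖ξ‖ ∧ g ζ = ψ ξ := by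
  set q := invFunOn g (ball 0 1) ∘ ψ
  have hq : DifferentiableOn ℂ q (ball 0 1) :=
    (differentiableOn_invFunOn_of_injOn isOpen_ball hg hinj).comp hψ hmaps
  have hq0 : q 0 = 0 := by
    simp only [q, comp_apply, hψ0]
    exact hinj.leftInvOn_invFunOn (mem_ball_self one_pos)
  have hqmaps : MapsTo q (ball 0 1) (closedBall 0 1) :=
    fun x hx => ball_subset_closedBall (invFunOn_mem (hmaps hx))
  exact ⟨q ξ, norm_le_norm_of_mapsTo_ball hq hqmaps hq0 (mem_ball_zero_iff.1 hξ),
    invFunOn_eq (hmaps hξ)⟩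

open scoped InnerProductSpace

section Slice

variable {E : Type*} [NormedAddCommGroup E] [InnerProductSpace ℂ E] {h : E → E} {u : E}

theorem differentiableOn_inner_comp_smul (hh : DifferentiableOn ℂ h (ball 0 1)) (hu : ‖u‖ = 1) :
    DifferentiableOn ℂ (fun ξ : ℂ => ⟪u, h (ξ • u)⟫_ℂ) (ball 0 1) := by
  have hmaps : MapsTo (fun ξ : ℂ => ξ • u) (ball 0 1) (ball 0 1) := fun ξ hξ => by
    simpa [norm_smul, hu] using hξ
  exact (innerSL ℂ u).differentiable.comp_differentiableOn
    (hh.comp (differentiable_id.smul_const u).differentiableOn hmaps)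

theorem hasDerivAt_inner_comp_smul (hh : HasFDerivAt h (ContinuousLinearMap.id ℂ E) 0) :
    HasDerivAt (fun ξ : ℂ => ⟪u, h (ξ • u)⟫_ℂ) ⟪u, u⟫_ℂ 0 := by
  have hline : HasDerivAt (fun ξ : ℂ => ξ • u) u 0 := by
    simpa using (hasDerivAt_id (0:ℂ)).smul_const u
  exact (innerSL ℂ u).hasFDerivAt.comp_hasDerivAt 0
    (hh.comp_hasDerivAt_of_eq 0 hline (zero_smul ℂ u).symm)

theorem dslope_inner_comp_smul (h0 : h 0 = 0) (hu : ‖u‖ = 1) {ξ : ℂ} (hξ : ξ ≠ 0) :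
    dslope (fun ξ : ℂ => ⟪u, h (ξ • u)⟫_ℂ) 0 ξ = ⟪ξ • u, h (ξ • u)⟫_ℂ / (‖ξ • u‖ : ℂ) ^ 2 := by
  rw [dslope_of_ne _ hξ, slope_def_field, zero_smul, h0, inner_zero_right, sub_zero, sub_zero,
    inner_smul_left, norm_smul, hu, mul_one, ← mul_conj']
  field_simp [(map_ne_zero (starRingEnd ℂ)).2 hξ]

end Slice

theorem exp_neg_mul_I_eq_cos_mul {β : ℝ} (hβ : Real.cos β ≠ 0) :
    exp (-(β:ℂ) * I) = Real.cos β * (1 - I * Real.tan β) := by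
  have hsin : Real.cos β * Real.tan β = Real.sin β := by
    rw [Real.tan_eq_sin_div_cos]
    field_simp
  rw [← ofReal_neg, exp_mul_I, ← ofReal_cos, ← ofReal_sin, Real.cos_neg, Real.sin_neg, ← hsin]
  push_cast
  ring

theorem re_exp_neg_mul_I_mul_eq {α β r : ℝ} {w v : ℂ} (hα : α ≠ 1) (hβ : Real.cos β ≠ 0)
    (hr : r ≠ 0)
    (hv : v = (-(α:ℂ) + I * (Real.tan β : ℂ)) / (1 - (α:ℂ)) +
      (1 - I * (Real.tan β : ℂ)) / (1 - (α:ℂ)) * (w / (r:ℂ) ^ 2)) :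
    (exp (-(β:ℂ) * I) * w).re = (1 - α) * Real.cos β * r ^ 2 * (v.re + α / (1 - α)) := by
  have hα' : (1 - (α:ℂ)) ≠ 0 := by exact_mod_cast sub_ne_zero.2 hα.symm
  have hαr : (1 - α) ≠ 0 := sub_ne_zero.2 hα.symm
  have hr' : (r:ℂ) ≠ 0 := ofReal_ne_zero.2 hr
  have key : exp (-(β:ℂ) * I) * w =
      (Real.cos β * r ^ 2 : ℝ) * ((1 - α : ℝ) * v + α - I * Real.tan β) := by
    rw [exp_neg_mul_I_eq_cos_mul hβ, hv]
    field_simp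
    push_cast
    ring
  rw [key, re_ofReal_mul]
  simp only [sub_re, add_re, ofReal_re, mul_re, I_re, I_im, ofReal_im]
  field_simp
  ring

theorem MtildeMem.exists_norm_le_and_eq {n : ℕ} {g : ℂ → ℂ} {α β : ℝ} {h : Cn n → Cn n}
    (hh : MtildeMem n g α β h) (hg : DifferentiableOn ℂ g (ball 0 1))
    (hinj : InjOn g (ball 0 1)) (hg0 : g 0 = 1) (hα : α ≠ 1) {z : Cn n} (hz : z ∈ ball 0 1)
    (hz0 : z ≠ 0) :
    ∃ ζ, ‖ζ‖ ≤ ‖z‖ ∧ g ζ = (-(α:ℂ) + I * (Real.tan β : ℂ)) / (1 - (α:ℂ)) +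
      (1 - I * (Real.tan β : ℂ)) / (1 - (α:ℂ)) * ((inner ℂ z (h z) : ℂ) / (‖z‖:ℂ) ^ 2) := by
  obtain ⟨hhd, hh0, hhJ, hhmem⟩ := hh
  set A : ℂ := (-(α:ℂ) + I * (Real.tan β : ℂ)) / (1 - (α:ℂ))
  set B : ℂ := (1 - I * (Real.tan β : ℂ)) / (1 - (α:ℂ))
  have hr0 : 0 < ‖z‖ := norm_pos_iff.2 hz0
  set u : Cn n := (‖z‖:ℂ)⁻¹ • z
  have hu : ‖u‖ = 1 := by simp [u, norm_smul, hr0.ne']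
  have hzu : (‖z‖:ℂ) • u = z := by simp [u, smul_smul, hr0.ne']
  have hα' : (1 - (α:ℂ)) ≠ 0 := by exact_mod_cast sub_ne_zero.2 hα.symm
  set ψ := fun ξ : ℂ => A + B * dslope (fun ξ : ℂ => ⟪u, h (ξ • u)⟫_ℂ) 0 ξ
  have hderiv : HasDerivAt (fun ξ : ℂ => ⟪u, h (ξ • u)⟫_ℂ) 1 0 := by
    have hhJ' := (hhd.differentiableAt (ball_mem_nhds 0 one_pos)).hasFDerivAt
    rw [hhJ] at hhJ'
    simpa [inner_self_eq_norm_sq_to_K, hu] using hasDerivAt_inner_comp_smul (u := u) hhJ'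
  have hψ : DifferentiableOn ℂ ψ (ball 0 1) :=
    (((differentiableOn_dslope (ball_mem_nhds 0 one_pos)).2
      (differentiableOn_inner_comp_smul hhd hu)).const_mul B).const_add A
  have hψ0 : ψ 0 = g 0 := by
    simp only [ψ, A, B, dslope_same, hderiv.deriv, hg0]
    field_simp
    ring
  have hmaps : MapsTo ψ (ball 0 1) (g '' ball 0 1) := by
    intro ξ hξ
    rcases eq_or_ne ξ 0 with rfl | hξ0
    · rw [hψ0]
      exact mem_image_of_mem g (mem_ball_self one_pos)
    · have hξu : ξ • u ∈ ball (0 : Cn n) 1 := by simpa [norm_smul, hu] using hξ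
      simp only [ψ, dslope_inner_comp_smul hh0 hu hξ0]
      exact hhmem (ξ • u) hξu (smul_ne_zero hξ0 (norm_ne_zero_iff.1 (by simp [hu])))
  obtain ⟨ζ, hζ, hgζ⟩ := exists_norm_le_and_eq_of_mapsTo_image hg hinj hψ hψ0 hmaps
    (ξ := ‖z‖) (by simpa using hz)
  refine ⟨ζ, by simpa using hζ, ?_⟩
  simpa only [ψ, dslope_inner_comp_smul hh0 hu (ofReal_ne_zero.2 hr0.ne'), hzu] using hgζ

theorem statement0_general {n : ℕ} (g : ℂ → ℂ) (hg : Admissible g)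
    (α β : ℝ) (hα : α ∈ Set.Ico (0:ℝ) 1) (hβ : β ∈ Set.Ioo (-(Real.pi/2)) (Real.pi/2))
    (h : Cn n → Cn n) (hh : MtildeMem n g α β h) :
    ∀ z ∈ ball (0 : Cn n) 1,
      (1 - α) * Real.cos β * ‖z‖^2 *
          (min (g (‖z‖:ℂ)).re (g (-(‖z‖:ℂ))).re + α/(1-α))
        ≤ ((inner ℂ z (Complex.exp (-(β:ℂ) * Complex.I) • h z) : ℂ)).re ∧
      ((inner ℂ z (Complex.exp (-(β:ℂ) * Complex.I) • h z) : ℂ)).re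
        ≤ (1 - α) * Real.cos β * ‖z‖^2 *
          (max (g (‖z‖:ℂ)).re (g (-(‖z‖:ℂ))).re + α/(1-α)) := by
  intro z hz
  rcases eq_or_ne z 0 with rfl | hz0
  · simp
  have hr0 : 0 < ‖z‖ := norm_pos_iff.2 hz0
  have hcos : 0 < Real.cos β := Real.cos_pos_of_mem_Ioo hβ
  obtain ⟨ζ, hζz, hgζ⟩ := hh.exists_norm_le_and_eq hg.holo hg.inj hg.one hα.2.ne hz hz0
  rw [inner_smul_right, re_exp_neg_mul_I_mul_eq hα.2.ne hcos.ne' hr0.ne' hgζ]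
  obtain ⟨hmin, hmax⟩ := hg.re_mem_Icc hr0 (mem_ball_zero_iff.1 hz) hζz
  have hfactor : 0 ≤ (1 - α) * Real.cos β * ‖z‖ ^ 2 :=
    mul_nonneg (mul_nonneg (sub_nonneg.2 hα.2.le) hcos.le) (sq_nonneg _)
  exact ⟨mul_le_mul_of_nonneg_left (by linarith) hfactor,
    mul_le_mul_of_nonneg_left (by linarith) hfactor⟩

theorem statement0 {n : ℕ} (hn : 1 ≤ n) (g : ℂ → ℂ) (hg : Admissible g)
    (α β : ℝ) (hα : α ∈ Set.Ico (0:ℝ) 1) (hβ : β ∈ Set.Ioo (-(Real.pi/2)) (Real.pi/2))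
    (h : Cn n → Cn n) (hh : MtildeMem n g α β h) :
    ∀ z ∈ ball (0 : Cn n) 1,
      (1 - α) * Real.cos β * ‖z‖^2 *
          (min (g (‖z‖:ℂ)).re (g (-(‖z‖:ℂ))).re + α/(1-α))
        ≤ ((inner ℂ z (Complex.exp (-(β:ℂ) * Complex.I) • h z) : ℂ)).re ∧
      ((inner ℂ z (Complex.exp (-(β:ℂ) * Complex.I) • h z) : ℂ)).re
        ≤ (1 - α) * Real.cos β * ‖z‖^2 *
          (max (g (‖z‖:ℂ)).re (g (-(‖z‖:ℂ))).re + α/(1-α)) :=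
  statement0_general g hg α β hα hβ h hh
end

section
/- Let n ≥ 1, let −1 ≤ A < B ≤ 1 and g(ζ) = (1 + Aζ)/(1 + Bζ), let α ∈ [0,1), β ∈ (−π/2, π/2), and let h ∈ M̃_g^{α,β}. Then for every z ∈ 𝔹ⁿ one has ((1 + A‖z‖)/(1 + B‖z‖) − (1/(1−α))·√(α² + tan²β))·(1−α)·cos β·‖z‖² ≤ |⟨h(z), z⟩| ≤ ((1 − A‖z‖)/(1 − B‖z‖) + (1/(1−α))·√(α² + tan²β))·(1−α)·cos β·‖z‖². -/
open Complex Metric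

/-!
Fix `z = r • u` with `‖u‖ = 1`. The function `p ζ = c₀ + c₁ ⟪ζ u, h (ζ u)⟫ / |ζ|²` from the
definition of the class is holomorphic on the disc (the quotient has a removable singularity at
`0`), satisfies `p 0 = 1` and takes values in `g 𝔻`. As `g` is a Möbius map, `g⁻¹ ∘ p` is a Schwarz
function, so `p r = g ξ` with `|ξ| ≤ r`, and `|g ξ|` then lies between `(1 + A r) / (1 + B r)` and
`(1 - A r) / (1 - B r)`. Since `|c₁| = 1 / ((1 - α) cos β)` and `|c₀| = √(α² + tan² β) / (1 - α)`,
the triangle inequality turns this into the two bounds for `⟪z, h z⟫ = r² (p r - c₀) / c₁`.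
-/

open scoped InnerProductSpace

noncomputable def janowski (A B : ℝ) (ξ : ℂ) : ℂ := (1 + (A:ℂ) * ξ) / (1 + (B:ℂ) * ξ)

section Janowski

variable {A B : ℝ}

lemma janowski_zero : janowski A B 0 = 1 := by simp [janowski]

lemma one_add_ofReal_mul_ne_zero (hB : |B| ≤ 1) {ξ : ℂ} (hξ : ‖ξ‖ < 1) : 1 + (B:ℂ) * ξ ≠ 0 := by
  intro h
  have hBξ : ‖(B:ℂ) * ξ‖ < 1 := by
    rw [norm_mul, Complex.norm_real, Real.norm_eq_abs]
    nlinarith [abs_nonneg B, norm_nonneg ξ]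
  rw [eq_neg_of_add_eq_zero_right h, norm_neg, norm_one] at hBξ
  exact lt_irrefl _ hBξ

lemma sub_mul_janowski {ξ : ℂ} (hξ : 1 + (B:ℂ) * ξ ≠ 0) :
    (A:ℂ) - B * janowski A B ξ = (A - B) / (1 + B * ξ) := by
  unfold janowski; field_simp; ring

lemma janowski_sub_one {ξ : ℂ} (hξ : 1 + (B:ℂ) * ξ ≠ 0) :
    janowski A B ξ - 1 = ξ * ((A:ℂ) - B * janowski A B ξ) := by
  rw [sub_mul_janowski hξ, janowski, div_sub_one hξ, mul_div_assoc']
  ring_nf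

lemma sub_mul_janowski_ne_zero (hAB : A ≠ B) {ξ : ℂ} (hξ : 1 + (B:ℂ) * ξ ≠ 0) :
    (A:ℂ) - B * janowski A B ξ ≠ 0 := by
  rw [sub_mul_janowski hξ]
  exact div_ne_zero (sub_ne_zero.mpr (by exact_mod_cast hAB)) hξ

lemma janowski_sub_one_div (hAB : A ≠ B) {ξ : ℂ} (hξ : 1 + (B:ℂ) * ξ ≠ 0) :
    (janowski A B ξ - 1) / ((A:ℂ) - B * janowski A B ξ) = ξ := by
  rw [janowski_sub_one hξ, mul_div_cancel_right₀ _ (sub_mul_janowski_ne_zero hAB hξ)]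

lemma norm_bounds_of_norm_sub_one_le_mul (hA : -1 ≤ A) (hAB : A ≤ B) (hB : B ≤ 1) {r : ℝ}
    (hr0 : 0 ≤ r) (hr1 : r < 1) {w : ℂ} (hw : ‖w - 1‖ ≤ r * ‖(A:ℂ) - B * w‖) :
    (1 + A * r) / (1 + B * r) ≤ ‖w‖ ∧ ‖w‖ ≤ (1 - A * r) / (1 - B * r) := by
  have hsq : ‖w - 1‖ ^ 2 ≤ (r * ‖(A:ℂ) - B * w‖) ^ 2 := by gcongr
  simp only [mul_pow, Complex.sq_norm, Complex.normSq_apply, sub_re, sub_im, mul_re, mul_im,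
    ofReal_re, ofReal_im, one_re, one_im] at hsq
  have hnw : ‖w‖ ^ 2 = w.re * w.re + w.im * w.im := by
    rw [Complex.sq_norm, Complex.normSq_apply]
  have hBr1 : 0 < 1 + B * r := by nlinarith
  have hBr2 : 0 < 1 - B * r := by nlinarith
  have hABle : A * B ≤ 1 := by nlinarith
  have hAB1 : 0 ≤ 1 - r ^ 2 * (A * B) := by
    nlinarith [mul_le_mul_of_nonneg_left hABle (sq_nonneg r)]
  -- expand `‖w - 1‖² ≤ r² ‖A - B w‖²` and use `re w ≤ ‖w‖`
  have hquad : ((1 + B * r) * ‖w‖ - (1 + A * r)) * ((1 - B * r) * ‖w‖ - (1 - A * r)) ≤ 0 := by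
    have hexp : ((1 + B * r) * ‖w‖ - (1 + A * r)) * ((1 - B * r) * ‖w‖ - (1 - A * r)) =
        (1 - B ^ 2 * r ^ 2) * (w.re * w.re + w.im * w.im) - 2 * (1 - r ^ 2 * (A * B)) * ‖w‖
          + (1 - A ^ 2 * r ^ 2) := by rw [← hnw]; ring
    nlinarith [mul_le_mul_of_nonneg_left (re_le_norm w) hAB1]
  have hgap : 0 ≤ r * (B - A) := mul_nonneg hr0 (sub_nonneg.2 hAB)
  rw [div_le_iff₀ hBr1, le_div_iff₀ hBr2]
  rcases mul_nonpos_iff.1 hquad with ⟨hP, hQ⟩ | ⟨hP, hQ⟩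
  · constructor <;> linarith
  · have hQ0 : (1 - B * r) * ‖w‖ - (1 - A * r) = 0 := by nlinarith
    have hP0 : (1 + B * r) * ‖w‖ - (1 + A * r) = 0 := by nlinarith
    constructor <;> linarith

lemma norm_bounds_of_mapsTo_janowski (hA : -1 ≤ A) (hAB : A < B) (hB : B ≤ 1) {φ : ℂ → ℂ}
    (hφ : DifferentiableOn ℂ φ (ball 0 1)) (hφ0 : φ 0 = 1)
    (hφg : Set.MapsTo φ (ball 0 1) (janowski A B '' ball 0 1)) {ζ : ℂ} (hζ : ζ ∈ ball 0 1) :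
    (1 + A * ‖ζ‖) / (1 + B * ‖ζ‖) ≤ ‖φ ζ‖ ∧ ‖φ ζ‖ ≤ (1 - A * ‖ζ‖) / (1 - B * ‖ζ‖) := by
  have hB' : |B| ≤ 1 := abs_le.2 ⟨by linarith, hB⟩
  -- `ψ = janowski⁻¹ ∘ φ` is a self-map of the disc fixing `0`
  set ψ : ℂ → ℂ := fun ζ => (φ ζ - 1) / ((A:ℂ) - B * φ ζ)
  have hψ : ∀ ζ ∈ ball (0:ℂ) 1, ψ ζ ∈ ball (0:ℂ) 1 ∧ φ ζ = janowski A B (ψ ζ) := by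
    intro ζ hζ
    obtain ⟨ξ, hξ, hφξ⟩ := hφg hζ
    have hψξ : ψ ζ = ξ := by
      simp only [ψ, ← hφξ]
      exact janowski_sub_one_div hAB.ne (one_add_ofReal_mul_ne_zero hB' (mem_ball_zero_iff.1 hξ))
    rw [hψξ]
    exact ⟨hξ, hφξ.symm⟩
  have hψd : DifferentiableOn ℂ ψ (ball 0 1) := by
    refine (hφ.sub_const 1).div ((hφ.const_mul _).const_sub _) fun ζ hζ => ?_
    have hξ := mem_ball_zero_iff.1 (hψ ζ hζ).1
    rw [(hψ ζ hζ).2]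
    exact sub_mul_janowski_ne_zero hAB.ne (one_add_ofReal_mul_ne_zero hB' hξ)
  have hschwarz : ‖ψ ζ‖ ≤ ‖ζ‖ :=
    Complex.norm_le_norm_of_mapsTo_ball hψd
      (fun ζ hζ => ball_subset_closedBall (hψ ζ hζ).1) (by simp [ψ, hφ0])
      (mem_ball_zero_iff.1 hζ)
  refine norm_bounds_of_norm_sub_one_le_mul hA hAB.le hB (norm_nonneg ζ) (mem_ball_zero_iff.1 hζ) ?_
  obtain ⟨hψζ, hφζ⟩ := hψ ζ hζ
  rw [hφζ, janowski_sub_one (one_add_ofReal_mul_ne_zero hB' (mem_ball_zero_iff.1 hψζ)), norm_mul]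
  gcongr

end Janowski

section RadialQuotient

variable {E : Type*} [NormedAddCommGroup E] [InnerProductSpace ℂ E]

noncomputable def radialQuotient (h : E → E) (u : E) : ℂ → ℂ :=
  dslope (fun ζ : ℂ => ⟪u, h (ζ • u)⟫_ℂ) 0

variable {h : E → E} {u : E}

lemma differentiableOn_radialQuotient (hh : DifferentiableOn ℂ h (ball 0 1)) (hu : ‖u‖ ≤ 1) :
    DifferentiableOn ℂ (radialQuotient h u) (ball 0 1) := by
  have hmaps : Set.MapsTo (fun ζ : ℂ => ζ • u) (ball 0 1) (ball 0 1) := fun ζ hζ => by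
    rw [mem_ball_zero_iff] at hζ ⊢
    rw [norm_smul]
    nlinarith [norm_nonneg u, norm_nonneg ζ]
  refine (differentiableOn_dslope (ball_mem_nhds 0 one_pos)).2 ?_
  exact (innerSL ℂ u).differentiable.comp_differentiableOn
    (hh.comp (differentiable_id.smul_const u).differentiableOn hmaps)

lemma radialQuotient_zero (hd : HasFDerivAt h (ContinuousLinearMap.id ℂ E) 0) (hu : ‖u‖ = 1) :
    radialQuotient h u 0 = 1 := by
  have hline : HasDerivAt (fun ζ : ℂ => ζ • u) u 0 := by
    simpa using (hasDerivAt_id (0:ℂ)).smul_const u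
  have hslice : HasDerivAt (fun ζ : ℂ => h (ζ • u)) u 0 := by
    rw [← zero_smul ℂ u] at hd
    exact hd.comp_hasDerivAt (0:ℂ) hline
  have hinner : HasDerivAt (fun ζ : ℂ => ⟪u, h (ζ • u)⟫_ℂ) ⟪u, u⟫_ℂ 0 :=
    (innerSL ℂ u).hasFDerivAt.comp_hasDerivAt 0 hslice
  rw [radialQuotient, dslope_same, hinner.deriv, inner_self_eq_norm_sq_to_K, hu]
  norm_num

lemma radialQuotient_of_ne (h0 : h 0 = 0) (hu : ‖u‖ = 1) {ζ : ℂ} (hζ : ζ ≠ 0) :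
    radialQuotient h u ζ = ⟪ζ • u, h (ζ • u)⟫_ℂ / (‖ζ • u‖ : ℂ) ^ 2 := by
  have hζc : (starRingEnd ℂ) ζ ≠ 0 := by simpa using hζ
  rw [radialQuotient, dslope_of_ne _ hζ, slope_def_field, inner_smul_left, norm_smul, hu, mul_one,
    ← ofReal_pow, Complex.sq_norm, normSq_eq_conj_mul_self, mul_div_mul_left _ _ hζc]
  simp [h0]

end RadialQuotient

-- `MtildeMem n g α β h` says `spiralAffine α β (⟪z, h z⟫ / ‖z‖²) ∈ g '' 𝔻` for `z ≠ 0`.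
noncomputable def spiralAffine (α β : ℝ) (w : ℂ) : ℂ :=
  (-(α:ℂ) + I * (Real.tan β : ℂ)) / (1 - (α:ℂ)) + (1 - I * (Real.tan β : ℂ)) / (1 - (α:ℂ)) * w

section SpiralAffine

variable {α β : ℝ}

lemma spiralAffine_one (hα : α ≠ 1) : spiralAffine α β 1 = 1 := by
  have : (1 - (α:ℂ)) ≠ 0 := sub_ne_zero.2 (by exact_mod_cast hα.symm)
  rw [spiralAffine]; field_simp; ring

lemma norm_one_sub_ofReal (hα : α ≤ 1) : ‖1 - (α:ℂ)‖ = 1 - α := by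
  rw [← ofReal_one, ← ofReal_sub, norm_real, Real.norm_of_nonneg (by linarith)]

lemma norm_spiralAffine_zero (hα : α ≤ 1) :
    ‖spiralAffine α β 0‖ = 1 / (1 - α) * √(α ^ 2 + Real.tan β ^ 2) := by
  rw [spiralAffine, mul_zero, add_zero, norm_div, norm_one_sub_ofReal hα, Complex.norm_def,
    normSq_apply]
  simp only [add_re, neg_re, ofReal_re, mul_re, I_re, I_im, ofReal_im, add_im, neg_im, mul_im]
  ring_nf

lemma norm_eq_norm_spiralAffine_sub (hα : α < 1) (hβ : 0 < Real.cos β) (w : ℂ) :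
    ‖w‖ = ‖spiralAffine α β w - spiralAffine α β 0‖ * ((1 - α) * Real.cos β) := by
  have hcos : ‖1 - I * (Real.tan β : ℂ)‖ = (Real.cos β)⁻¹ := by
    rw [← Real.inv_sqrt_one_add_tan_sq hβ, inv_inv, Complex.norm_def, normSq_apply]
    simp only [sub_re, one_re, mul_re, I_re, I_im, ofReal_re, ofReal_im, sub_im, one_im, mul_im]
    ring_nf
  have h1α : (0:ℝ) < 1 - α := by linarith
  rw [spiralAffine, spiralAffine, mul_zero, add_zero, add_sub_cancel_left, norm_mul, norm_div,
    norm_one_sub_ofReal hα.le, hcos]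
  field_simp

end SpiralAffine

lemma MtildeMem.norm_spiralAffine_bounds {n : ℕ} {A B α β : ℝ} (hA : -1 ≤ A) (hAB : A < B)
    (hB : B ≤ 1) (hα : α ≠ 1) {h : Cn n → Cn n} (hh : MtildeMem n (janowski A B) α β h)
    {z : Cn n} (hz : z ∈ ball 0 1) (hz0 : z ≠ 0) :
    (1 + A * ‖z‖) / (1 + B * ‖z‖) ≤ ‖spiralAffine α β (⟪z, h z⟫_ℂ / (‖z‖ : ℂ) ^ 2)‖ ∧
      ‖spiralAffine α β (⟪z, h z⟫_ℂ / (‖z‖ : ℂ) ^ 2)‖ ≤ (1 - A * ‖z‖) / (1 - B * ‖z‖) := by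
  obtain ⟨hd, h0, hd0, hmem⟩ := hh
  have hr : 0 < ‖z‖ := norm_pos_iff.2 hz0
  set u : Cn n := ((‖z‖ : ℂ))⁻¹ • z
  have hu : ‖u‖ = 1 := by
    rw [norm_smul, norm_inv, norm_real, Real.norm_of_nonneg hr.le, inv_mul_cancel₀ hr.ne']
  have hzu : (‖z‖ : ℂ) • u = z := smul_inv_smul₀ (ofReal_ne_zero.2 hr.ne') z
  set φ := spiralAffine α β ∘ radialQuotient h u with hφ
  have hφ0 : φ 0 = 1 := by
    have hd' : HasFDerivAt h (ContinuousLinearMap.id ℂ (Cn n)) 0 :=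
      hd0 ▸ (hd.differentiableAt (ball_mem_nhds 0 one_pos)).hasFDerivAt
    rw [hφ, Function.comp_apply, radialQuotient_zero hd' hu, spiralAffine_one hα]
  have hφg : Set.MapsTo φ (ball 0 1) (janowski A B '' ball 0 1) := by
    intro ζ hζ
    obtain rfl | hζ0 := eq_or_ne ζ 0
    · exact ⟨0, mem_ball_self one_pos, by rw [janowski_zero, hφ0]⟩
    have hζu : ζ • u ∈ ball (0 : Cn n) 1 := by
      rwa [mem_ball_zero_iff, norm_smul, hu, mul_one, ← mem_ball_zero_iff]
    rw [hφ, Function.comp_apply, radialQuotient_of_ne h0 hu hζ0]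
    exact hmem _ hζu (smul_ne_zero hζ0 (norm_ne_zero_iff.1 (hu ▸ one_ne_zero)))
  have hφd : DifferentiableOn ℂ φ (ball 0 1) :=
    ((differentiableOn_radialQuotient hd hu.le).const_mul _).const_add _
  have hrz : (‖z‖ : ℂ) ∈ ball (0 : ℂ) 1 := by
    rwa [mem_ball_zero_iff, norm_real, Real.norm_of_nonneg hr.le, ← mem_ball_zero_iff]
  have := norm_bounds_of_mapsTo_janowski hA hAB hB hφd hφ0 hφg hrz
  rwa [norm_real, Real.norm_of_nonneg hr.le, hφ, Function.comp_apply,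
    radialQuotient_of_ne h0 hu (ofReal_ne_zero.2 hr.ne'), hzu] at this

theorem statement1_general {n : ℕ} (A B : ℝ) (hA : -1 ≤ A) (hAB : A < B) (hB : B ≤ 1)
    (g : ℂ → ℂ) (hg : ∀ ζ, g ζ = (1 + (A:ℂ) * ζ) / (1 + (B:ℂ) * ζ))
    (α β : ℝ) (hα : α ∈ Set.Ico (0:ℝ) 1) (hβ : β ∈ Set.Ioo (-(Real.pi/2)) (Real.pi/2))
    (h : Cn n → Cn n) (hh : MtildeMem n g α β h) :
    ∀ z ∈ ball (0 : Cn n) 1,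
      ((1 + A * ‖z‖)/(1 + B * ‖z‖) - (1/(1-α)) * Real.sqrt (α^2 + Real.tan β ^ 2)) *
          ((1-α) * Real.cos β * ‖z‖^2)
        ≤ ‖(inner ℂ z (h z) : ℂ)‖ ∧
      ‖(inner ℂ z (h z) : ℂ)‖
        ≤ ((1 - A * ‖z‖)/(1 - B * ‖z‖) + (1/(1-α)) * Real.sqrt (α^2 + Real.tan β ^ 2)) *
          ((1-α) * Real.cos β * ‖z‖^2) := by
  intro z hz
  obtain rfl | hz0 := eq_or_ne z 0
  · simp
  obtain rfl : g = janowski A B := funext hg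
  set v := ⟪z, h z⟫_ℂ / (‖z‖ : ℂ) ^ 2
  have hr : 0 < ‖z‖ := norm_pos_iff.2 hz0
  have hv : ‖⟪z, h z⟫_ℂ‖ = ‖v‖ * ‖z‖ ^ 2 := by
    rw [norm_div, norm_pow, norm_real, Real.norm_of_nonneg hr.le, div_mul_cancel₀ _ (by positivity)]
  obtain ⟨hlo, hhi⟩ := hh.norm_spiralAffine_bounds hA hAB hB hα.2.ne hz hz0
  have hcos : 0 < Real.cos β := Real.cos_pos_of_mem_Ioo hβ
  have hK : 0 ≤ (1 - α) * Real.cos β * ‖z‖ ^ 2 := by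
    have : 0 < 1 - α := by linarith [hα.2]
    positivity
  rw [hv, norm_eq_norm_spiralAffine_sub hα.2 hcos v, ← norm_spiralAffine_zero hα.2.le,
    mul_assoc ‖spiralAffine α β v - spiralAffine α β 0‖]
  constructor
  · exact mul_le_mul_of_nonneg_right
      (by linarith [norm_sub_norm_le (spiralAffine α β v) (spiralAffine α β 0)]) hK
  · exact mul_le_mul_of_nonneg_right
      (by linarith [norm_sub_le (spiralAffine α β v) (spiralAffine α β 0)]) hK

theorem statement1 {n : ℕ} (hn : 1 ≤ n) (A B : ℝ) (hA : -1 ≤ A) (hAB : A < B) (hB : B ≤ 1)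
    (g : ℂ → ℂ) (hg : ∀ ζ, g ζ = (1 + (A:ℂ) * ζ) / (1 + (B:ℂ) * ζ))
    (α β : ℝ) (hα : α ∈ Set.Ico (0:ℝ) 1) (hβ : β ∈ Set.Ioo (-(Real.pi/2)) (Real.pi/2))
    (h : Cn n → Cn n) (hh : MtildeMem n g α β h) :
    ∀ z ∈ ball (0 : Cn n) 1,
      ((1 + A * ‖z‖)/(1 + B * ‖z‖) - (1/(1-α)) * Real.sqrt (α^2 + Real.tan β ^ 2)) *
          ((1-α) * Real.cos β * ‖z‖^2)
        ≤ ‖(inner ℂ z (h z) : ℂ)‖ ∧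
      ‖(inner ℂ z (h z) : ℂ)‖
        ≤ ((1 - A * ‖z‖)/(1 - B * ‖z‖) + (1/(1-α)) * Real.sqrt (α^2 + Real.tan β ^ 2)) *
          ((1-α) * Real.cos β * ‖z‖^2) :=
  statement1_general A B hA hAB hB g hg α β hα hβ h hh
end

section
/- Let n ≥ 1, let −1 ≤ A < B ≤ 1, g(ζ) = (1 + Aζ)/(1 + Bζ), α ∈ [0,1), β ∈ (−π/2, π/2), and let F ∈ Ŝ_g^{α,β}(𝔹ⁿ). Then for every z ∈ 𝔹ⁿ, ‖[J_F(z)]⁻¹ F(z)‖ ≥ ((1 + A‖z‖)/(1 + B‖z‖) − (1/(1−α))·√(α² + tan²β))·(1−α)·cos β·‖z‖. -/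
open Complex Metric

/-!
Put `w = [J_F]⁻¹ F ∈ M̃_g^{α,β}` and write `z = r u` with `‖u‖ = 1`. Along the complex line
through `u`, `P(ξ) = c₁ + c₂ ⟪ξu, w(ξu)⟫ / ‖ξu‖²` extends holomorphically to the disc with
`P(0) = 1` and takes its values in `g(𝔻)`, so `P = g ∘ ω` for a Schwarz function `ω`; hence
`Re P(r) ≥ min_{|ζ| ≤ r} Re g(ζ) = g(r)`. As `|c₁| = √(α² + tan²β)/(1-α)` and
`|c₂| = 1/((1-α) cos β)`, this bounds `|⟪z, w z⟫| / ‖z‖²` from below, and Cauchy–Schwarz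
finishes.
-/

open Set

noncomputable def moebius (A B : ℝ) (ζ : ℂ) : ℂ := (1 + (A:ℂ) * ζ) / (1 + (B:ℂ) * ζ)

section Moebius

variable {A B : ℝ}

lemma moebius_zero : moebius A B 0 = 1 := by simp [moebius]

lemma one_add_ofReal_mul_ne_zero_s8 (hB₀ : -1 ≤ B) (hB₁ : B ≤ 1) {ζ : ℂ} (hζ : ‖ζ‖ < 1) :
    1 + (B:ℂ) * ζ ≠ 0 := by
  intro h
  have : ‖(B:ℂ) * ζ‖ < 1 := by
    rw [norm_mul, Complex.norm_real, Real.norm_eq_abs]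
    exact lt_of_le_of_lt (mul_le_of_le_one_left (norm_nonneg ζ) (abs_le.2 ⟨hB₀, hB₁⟩)) hζ
  simp [eq_neg_of_add_eq_zero_right h] at this

lemma moebius_mul {ζ : ℂ} (hζ : 1 + (B:ℂ) * ζ ≠ 0) :
    moebius A B ζ * (1 + B * ζ) = 1 + A * ζ :=
  div_mul_cancel₀ _ hζ

lemma sub_mul_moebius_ne_zero (hAB : A ≠ B) {ζ : ℂ} (hζ : 1 + (B:ℂ) * ζ ≠ 0) :
    (A:ℂ) - B * moebius A B ζ ≠ 0 := by
  have : ((A:ℂ) - B * moebius A B ζ) * (1 + B * ζ) = A - B := by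
    linear_combination (-(B:ℂ)) * moebius_mul (A := A) hζ
  exact left_ne_zero_of_mul (this ▸ sub_ne_zero.2 (by exact_mod_cast hAB))

lemma moebius_sub_one_div (hAB : A ≠ B) {ζ : ℂ} (hζ : 1 + (B:ℂ) * ζ ≠ 0) :
    (moebius A B ζ - 1) / (A - B * moebius A B ζ) = ζ := by
  rw [div_eq_iff (sub_mul_moebius_ne_zero hAB hζ)]
  linear_combination moebius_mul (A := A) hζ

lemma sub_add_mul_nonneg (hB₀ : -1 ≤ B) (hB₁ : B ≤ 1) {r x y : ℝ} (hr₀ : 0 ≤ r) (hr₁ : r < 1)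
    (hxy : x ^ 2 + y ^ 2 ≤ r ^ 2) : 0 ≤ r - x + B * (r * x - (x ^ 2 + y ^ 2)) := by
  obtain ⟨hx₀, hx₁⟩ := abs_le_of_sq_le_sq' (a := x) (by nlinarith [sq_nonneg y]) hr₀
  rcases le_total 0 B with hB | hB
  · nlinarith [mul_nonneg hB (sub_nonneg.2 hxy),
      mul_nonneg (sub_nonneg.2 hx₁) (by nlinarith : 0 ≤ 1 - B * r)]
  · nlinarith [mul_nonneg (neg_nonneg.2 hB) (sq_nonneg y),
      mul_nonneg (sub_nonneg.2 hx₁) (by nlinarith : 0 ≤ 1 + B * x)]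

theorem div_le_re_moebius (hAB : A ≤ B) (hB₀ : -1 ≤ B) (hB₁ : B ≤ 1) {r : ℝ} (hr₀ : 0 ≤ r)
    (hr₁ : r < 1) {ζ : ℂ} (hζ : ‖ζ‖ ≤ r) : (1 + A * r) / (1 + B * r) ≤ (moebius A B ζ).re := by
  have hBr : 0 < 1 + B * r := by nlinarith
  have hζ' : 1 + (B:ℂ) * ζ ≠ 0 := one_add_ofReal_mul_ne_zero_s8 hB₀ hB₁ (hζ.trans_lt hr₁)
  have hBr' : (1 + B * r : ℂ) ≠ 0 := by exact_mod_cast hBr.ne'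
  have key : moebius A B ζ = ((1 + A * r) / (1 + B * r) : ℝ) +
      ((B - A) / (1 + B * r) : ℝ) * ((r - ζ) / (1 + B * ζ)) := by
    rw [← mul_left_inj' (mul_ne_zero hBr' hζ')]
    push_cast
    field_simp
    linear_combination (1 + B * r : ℂ) * moebius_mul (A := A) hζ'
  have hre : 0 ≤ ((r - ζ) / (1 + B * ζ)).re := by
    rw [Complex.div_re, ← add_div]
    refine div_nonneg ?_ (Complex.normSq_nonneg _)
    have hxy : ζ.re ^ 2 + ζ.im ^ 2 ≤ r ^ 2 := by
      have := pow_le_pow_left₀ (norm_nonneg ζ) hζ 2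
      rwa [Complex.sq_norm, Complex.normSq_apply, ← sq, ← sq] at this
    refine (sub_add_mul_nonneg hB₀ hB₁ hr₀ hr₁ hxy).trans_eq ?_
    simp only [Complex.sub_re, Complex.sub_im, Complex.add_re, Complex.add_im, Complex.ofReal_re,
      Complex.ofReal_im, Complex.re_ofReal_mul, Complex.im_ofReal_mul, Complex.one_re,
      Complex.one_im]
    ring
  rw [key, Complex.add_re, Complex.re_ofReal_mul, Complex.ofReal_re]
  have : 0 ≤ (B - A) / (1 + B * r) := div_nonneg (by linarith) hBr.le
  nlinarith

end Moebius

theorem div_le_re_of_mapsTo_moebius {A B : ℝ} (hA : -1 ≤ A) (hAB : A < B) (hB : B ≤ 1)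
    {P : ℂ → ℂ} (hP : DifferentiableOn ℂ P (ball 0 1)) (hP₀ : P 0 = 1)
    (hPg : MapsTo P (ball 0 1) (moebius A B '' ball 0 1)) {r : ℝ} (hr₀ : 0 ≤ r) (hr₁ : r < 1) :
    (1 + A * r) / (1 + B * r) ≤ (P r).re := by
  have hB₀ : -1 ≤ B := by linarith
  have hpreimage : ∀ ξ ∈ ball (0:ℂ) 1, ∃ ζ, ‖ζ‖ < 1 ∧ (A:ℂ) - B * P ξ ≠ 0 ∧
      (P ξ - 1) / (A - B * P ξ) = ζ ∧ P ξ = moebius A B ζ := by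
    intro ξ hξ
    obtain ⟨ζ, hζ, hζP⟩ := hPg hξ
    rw [mem_ball_zero_iff] at hζ
    have hζ' := one_add_ofReal_mul_ne_zero_s8 hB₀ hB hζ
    rw [← hζP]
    exact ⟨ζ, hζ, sub_mul_moebius_ne_zero hAB.ne hζ', moebius_sub_one_div hAB.ne hζ', rfl⟩
  -- `ω = g⁻¹ ∘ P` is the Schwarz function of the subordination `P ≺ g`
  set ω : ℂ → ℂ := fun ξ => (P ξ - 1) / (A - B * P ξ)
  have hω : DifferentiableOn ℂ ω (ball 0 1) :=
    (hP.sub_const 1).div ((differentiableOn_const _).sub ((differentiableOn_const _).mul hP))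
      fun ξ hξ => by obtain ⟨-, -, hne, -⟩ := hpreimage ξ hξ; exact hne
  have hω₀ : ω 0 = 0 := by simp [ω, hP₀]
  have hωmaps : MapsTo ω (ball 0 1) (closedBall 0 1) := fun ξ hξ => by
    obtain ⟨ζ, hζ, -, hωζ, -⟩ := hpreimage ξ hξ
    simpa [ω, hωζ] using hζ.le
  have hr : ‖(r:ℂ)‖ = r := by rw [Complex.norm_real, Real.norm_of_nonneg hr₀]
  obtain ⟨ζ, -, -, hωζ, hPζ⟩ := hpreimage r (by rwa [mem_ball_zero_iff, hr])
  have hschwarz := Complex.norm_le_norm_of_mapsTo_ball hω hωmaps hω₀ (hr.trans_lt hr₁)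
  rw [hPζ]
  refine div_le_re_moebius hAB.le hB₀ hB hr₀ hr₁ ?_
  simpa [ω, hωζ, abs_of_nonneg hr₀] using hschwarz

section Slice

variable {E : Type*} [NormedAddCommGroup E] [InnerProductSpace ℂ E]

/-- `ξ ↦ ⟪u, w (ξ • u)⟫ / ξ`, extended across `0` by its derivative there. -/
noncomputable def sliceQuotient (w : E → E) (u : E) : ℂ → ℂ :=
  dslope (fun ξ : ℂ => inner ℂ u (w (ξ • u))) 0

variable {w : E → E} {u : E}

lemma sliceQuotient_eq (hw₀ : w 0 = 0) (hu : ‖u‖ = 1) {ξ : ℂ} (hξ : ξ ≠ 0) :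
    sliceQuotient w u ξ = inner ℂ (ξ • u) (w (ξ • u)) / (‖ξ • u‖ : ℂ) ^ 2 := by
  have hξ' : (starRingEnd ℂ) ξ ≠ 0 := by simpa using hξ
  rw [sliceQuotient, dslope_of_ne _ hξ, slope_def_field, zero_smul, hw₀, inner_zero_right,
    sub_zero, sub_zero, inner_smul_left, norm_smul, hu, mul_one, ← Complex.ofReal_pow,
    ← Complex.normSq_eq_norm_sq, ← Complex.mul_conj, mul_comm ξ, mul_div_mul_left _ _ hξ']

lemma sliceQuotient_zero (hw : DifferentiableAt ℂ w 0)
    (hw' : fderiv ℂ w 0 = ContinuousLinearMap.id ℂ E) (hu : ‖u‖ = 1) :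
    sliceQuotient w u 0 = 1 := by
  have hw₀ : HasFDerivAt w (ContinuousLinearMap.id ℂ E) ((0:ℂ) • u) := by
    rw [zero_smul, ← hw']
    exact hw.hasFDerivAt
  have hline : HasDerivAt (fun ξ : ℂ => w (ξ • u)) u 0 := by
    simpa [Function.comp_def] using hw₀.comp_hasDerivAt (0:ℂ) ((hasDerivAt_id (0:ℂ)).smul_const u)
  have hslice : HasDerivAt (fun ξ : ℂ => inner ℂ u (w (ξ • u))) (inner ℂ u u) 0 :=
    (innerSL ℂ u).hasFDerivAt.comp_hasDerivAt 0 hline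
  rw [sliceQuotient, dslope_same, hslice.deriv]
  simp [inner_self_eq_norm_sq_to_K, hu]

lemma differentiableOn_sliceQuotient (hw : DifferentiableOn ℂ w (ball 0 1)) (hu : ‖u‖ ≤ 1) :
    DifferentiableOn ℂ (sliceQuotient w u) (ball 0 1) := by
  refine (Complex.differentiableOn_dslope (ball_mem_nhds _ one_pos)).2 ?_
  have hmaps : MapsTo (fun ξ : ℂ => ξ • u) (ball 0 1) (ball 0 1) := fun ξ hξ => by
    rw [mem_ball_zero_iff] at hξ ⊢
    rw [norm_smul]
    exact (mul_le_of_le_one_right (norm_nonneg ξ) hu).trans_lt hξ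
  exact (innerSL ℂ u).differentiable.comp_differentiableOn
    (hw.comp (differentiable_id.smul_const u).differentiableOn hmaps)

end Slice

lemma norm_inner_div_sq_mul_norm_le {E : Type*} [NormedAddCommGroup E] [InnerProductSpace ℂ E]
    (x y : E) : ‖inner ℂ x y / (‖x‖ : ℂ) ^ 2‖ * ‖x‖ ≤ ‖y‖ := by
  rcases eq_or_ne x 0 with rfl | hx
  · simp
  have hx' : 0 < ‖x‖ := norm_pos_iff.2 hx
  rw [norm_div, norm_pow, Complex.norm_real, Real.norm_of_nonneg hx'.le, div_mul_eq_mul_div,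
    div_le_iff₀ (by positivity), sq, ← mul_assoc]
  exact mul_le_mul_of_nonneg_right ((norm_inner_le_norm x y).trans_eq (mul_comm _ _)) hx'.le

/-- The affine map `q ↦ c₁ + c₂ q` in the definition of `M̃_g^{α,β}`. -/
noncomputable def tilt (α β : ℝ) (q : ℂ) : ℂ :=
  (-(α:ℂ) + Complex.I * (Real.tan β : ℂ)) / (1 - (α:ℂ)) +
    (1 - Complex.I * (Real.tan β : ℂ)) / (1 - (α:ℂ)) * q

section Tilt

variable {α β : ℝ}

lemma tilt_one (hα : α ≠ 1) : tilt α β 1 = 1 := by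
  have : (1 : ℂ) - α ≠ 0 := sub_ne_zero.2 (by exact_mod_cast hα.symm)
  rw [tilt, mul_one, ← add_div, div_eq_one_iff_eq this]
  ring

lemma re_tilt_le (hα : α < 1) (hβ : 0 < Real.cos β) (q : ℂ) :
    (tilt α β q).re ≤ √(α ^ 2 + Real.tan β ^ 2) / (1 - α) + ‖q‖ / ((1 - α) * Real.cos β) := by
  have hα' : ‖(1 : ℂ) - α‖ = 1 - α := by
    rw [← Complex.ofReal_one, ← Complex.ofReal_sub, Complex.norm_real,
      Real.norm_of_nonneg (by linarith)]
  have hc₁ : ‖-(α:ℂ) + Complex.I * (Real.tan β : ℂ)‖ = √(α ^ 2 + Real.tan β ^ 2) := by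
    rw [show -(α:ℂ) + Complex.I * (Real.tan β : ℂ) = ((-α : ℝ) : ℂ) + (Real.tan β) * Complex.I by
      push_cast; ring, Complex.norm_add_mul_I, neg_sq]
  have hc₂ : ‖1 - Complex.I * (Real.tan β : ℂ)‖ = (Real.cos β)⁻¹ := by
    rw [show 1 - Complex.I * (Real.tan β : ℂ) = ((1 : ℝ) : ℂ) + (-Real.tan β : ℝ) * Complex.I by
      push_cast; ring, Complex.norm_add_mul_I, neg_sq, one_pow, ← Real.inv_sqrt_one_add_tan_sq hβ,
      inv_inv]
  calc (tilt α β q).re ≤ ‖tilt α β q‖ := Complex.re_le_norm _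
    _ ≤ _ := norm_add_le _ _
    _ = √(α ^ 2 + Real.tan β ^ 2) / (1 - α) + ‖q‖ / ((1 - α) * Real.cos β) := by
      rw [norm_mul, norm_div, norm_div, hc₁, hc₂, hα']
      field_simp

end Tilt

theorem MtildeMem.div_le_re_tilt {n : ℕ} {A B α β : ℝ} (hA : -1 ≤ A) (hAB : A < B) (hB : B ≤ 1)
    (hα : α < 1) {w : Cn n → Cn n} (hw : MtildeMem n (moebius A B) α β w) {z : Cn n}
    (hz : z ∈ ball 0 1) (hz₀ : z ≠ 0) :
    (1 + A * ‖z‖) / (1 + B * ‖z‖) ≤ (tilt α β (inner ℂ z (w z) / (‖z‖ : ℂ) ^ 2)).re := by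
  obtain ⟨hwd, hw₀, hw', hwg⟩ := hw
  have hr₀ : 0 < ‖z‖ := norm_pos_iff.2 hz₀
  set u : Cn n := ((‖z‖⁻¹ : ℝ) : ℂ) • z
  have hu : ‖u‖ = 1 := by
    rw [norm_smul, Complex.norm_real, Real.norm_of_nonneg (inv_nonneg.2 hr₀.le),
      inv_mul_cancel₀ hr₀.ne']
  have hzu : ((‖z‖ : ℝ) : ℂ) • u = z := by
    rw [smul_smul, ← Complex.ofReal_mul, mul_inv_cancel₀ hr₀.ne', Complex.ofReal_one, one_smul]
  set P : ℂ → ℂ := fun ξ => tilt α β (sliceQuotient w u ξ)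
  have hP : DifferentiableOn ℂ P (ball 0 1) :=
    ((differentiableOn_sliceQuotient hwd hu.le).const_mul _).const_add _
  have hP₀ : P 0 = 1 := by
    simp only [P, sliceQuotient_zero (hwd.differentiableAt (ball_mem_nhds _ one_pos)) hw' hu,
      tilt_one hα.ne]
  have hPg : MapsTo P (ball 0 1) (moebius A B '' ball 0 1) := by
    intro ξ hξ
    rcases eq_or_ne ξ 0 with rfl | hξ₀
    · exact ⟨0, mem_ball_self one_pos, by rw [hP₀, moebius_zero]⟩
    have hξu : ξ • u ∈ ball (0 : Cn n) 1 := by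
      rwa [mem_ball_zero_iff, norm_smul, hu, mul_one, ← mem_ball_zero_iff]
    simp only [P, sliceQuotient_eq hw₀ hu hξ₀]
    exact hwg _ hξu (smul_ne_zero hξ₀ (norm_ne_zero_iff.1 (hu.trans_ne one_ne_zero)))
  have := div_le_re_of_mapsTo_moebius hA hAB hB hP hP₀ hPg hr₀.le (mem_ball_zero_iff.1 hz)
  simp only [P] at this
  rwa [sliceQuotient_eq hw₀ hu (by exact_mod_cast hr₀.ne'), hzu] at this

theorem statement8_general {n : ℕ} (A B : ℝ) (hA : -1 ≤ A) (hAB : A < B) (hB : B ≤ 1)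
    (g : ℂ → ℂ) (hg : ∀ ζ, g ζ = (1 + (A:ℂ) * ζ) / (1 + (B:ℂ) * ζ))
    (α β : ℝ) (hα : α ∈ Set.Ico (0:ℝ) 1) (hβ : β ∈ Set.Ioo (-(Real.pi/2)) (Real.pi/2))
    (F : Cn n → Cn n) (hF : ShatMem n g α β F) :
    ∀ z ∈ ball (0 : Cn n) 1, ∀ u : Cn n, fderiv ℂ F z u = F z →
      ((1 + A * ‖z‖)/(1 + B * ‖z‖) - (1/(1-α)) * Real.sqrt (α^2 + Real.tan β ^ 2)) *
          ((1-α) * Real.cos β * ‖z‖) ≤ ‖u‖ := by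
  obtain rfl : g = moebius A B := funext hg
  obtain ⟨-, -, -, hbij, w, hwF, hw⟩ := hF
  intro z hz u hu
  obtain rfl : u = w z := (hbij z hz).injective (hu.trans (hwF z hz).symm)
  rcases eq_or_ne z 0 with rfl | hz₀
  · simp
  have hcos := Real.cos_pos_of_mem_Ioo hβ
  set q := inner ℂ z (w z) / (‖z‖ : ℂ) ^ 2
  have hlow := hw.div_le_re_tilt hA hAB hB hα.2 hz hz₀
  have hup := re_tilt_le hα.2 hcos q
  calc _ = ((1 + A * ‖z‖) / (1 + B * ‖z‖) - √(α ^ 2 + Real.tan β ^ 2) / (1 - α)) *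
        ((1 - α) * Real.cos β) * ‖z‖ := by ring
    _ ≤ ‖q‖ * ‖z‖ := by
      gcongr
      rw [← le_div_iff₀ (mul_pos (sub_pos.2 hα.2) hcos)]
      linarith
    _ ≤ ‖w z‖ := norm_inner_div_sq_mul_norm_le z (w z)

theorem statement8 {n : ℕ} (hn : 1 ≤ n) (A B : ℝ) (hA : -1 ≤ A) (hAB : A < B) (hB : B ≤ 1)
    (g : ℂ → ℂ) (hg : ∀ ζ, g ζ = (1 + (A:ℂ) * ζ) / (1 + (B:ℂ) * ζ))
    (α β : ℝ) (hα : α ∈ Set.Ico (0:ℝ) 1) (hβ : β ∈ Set.Ioo (-(Real.pi/2)) (Real.pi/2))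
    (F : Cn n → Cn n) (hF : ShatMem n g α β F) :
    ∀ z ∈ ball (0 : Cn n) 1, ∀ u : Cn n, fderiv ℂ F z u = F z →
      ((1 + A * ‖z‖)/(1 + B * ‖z‖) - (1/(1-α)) * Real.sqrt (α^2 + Real.tan β ^ 2)) *
          ((1-α) * Real.cos β * ‖z‖) ≤ ‖u‖ :=
  statement8_general A B hA hAB hB g hg α β hα hβ F hF
end
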